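/- For any y with 0 ≤ y ≤ l ≤ m ≤ n, the string a^(l−y) b^y is a longest common subsequence of the strings a^(m−y) b^y and a^(l−y) b^(n+y−l) (where a, b are distinct symbols and x^k denotes k repetitions of x), and the number of its embeddings in this pair of strings is exactly C(m−y, l−y) · C(n+y−l, y). -/

import Mathlib

/-!
A common subsequence of `a^M b^Y` and `a^L b^N` (with `a ≠ b`) has the shape `a^i b^j` with
`j ≤ Y`, and counting occurrences of `a` gives `i ≤ L`; so `a^L b^Y` is a longest one when
`L ≤ M` and `Y ≤ N`. An embedding of `a^c₁ b^c₂` into `a^d₁ b^d₂` must send the `a`-block into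
the `a`-block and the `b`-block into the `b`-block, so it is a pair of strictly increasing maps
`Fin c₁ → Fin d₁` and `Fin c₂ → Fin d₂`, of which there are `C(d₁, c₁) · C(d₂, c₂)`. The
embeddings into the two strings are chosen independently.
-/

/-- `C` is a longest common subsequence of `A` and `B`. -/
def IsLCS {α : Type*} (A B C : List α) : Prop :=
  C.Sublist A ∧ C.Sublist B ∧ ∀ D : List α, D.Sublist A → D.Sublist B → D.length ≤ C.length

/-- The number of embeddings of the string `C` as a common subsequence of `A` and `B`:
pairs of strictly increasing position sequences matching the characters of `C`. -/
noncomputable def EmbCount {α : Type*} (A B C : List α) : ℕ :=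
  Nat.card {pq : (Fin C.length → Fin A.length) × (Fin C.length → Fin B.length) //
    StrictMono pq.1 ∧ StrictMono pq.2 ∧
      ∀ i, A.get (pq.1 i) = C.get i ∧ B.get (pq.2 i) = C.get i}

def OrderEmbedding.equivStrictMono {α β : Type*} [LinearOrder α] [Preorder β] :
    (α ↪o β) ≃ {f : α → β // StrictMono f} where
  toFun e := ⟨e, e.strictMono⟩
  invFun f := OrderEmbedding.ofStrictMono f.1 f.2
  left_inv _ := rfl
  right_inv _ := rfl

theorem Fin.card_subtype_strictMono (k n : ℕ) :
    Nat.card {f : Fin k → Fin n // StrictMono f} = n.choose k := by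
  rw [← Nat.card_congr OrderEmbedding.equivStrictMono,
    Nat.card_congr Set.powersetCard.ofFinEmbEquiv, Set.powersetCard.card,
    Nat.card_eq_fintype_card, Fintype.card_fin]

namespace Fin

variable {c₁ c₂ d₁ d₂ : ℕ}

theorem strictMono_append_castAdd_natAdd {f : Fin c₁ → Fin d₁} {g : Fin c₂ → Fin d₂}
    (hf : StrictMono f) (hg : StrictMono g) :
    StrictMono (append (castAdd d₂ ∘ f) (natAdd d₁ ∘ g)) := by
  intro i j hij
  induction i using Fin.addCases with
  | left i =>
    induction j using Fin.addCases with
    | left j => simp only [append_left, Function.comp_apply]; exact hf hij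
    | right j => simp [Fin.lt_def]; omega
  | right i =>
    induction j using Fin.addCases with
    | left j => simp [Fin.lt_def] at hij; omega
    | right j => simpa using hg (by simpa using hij)

def BlockCond (c₁ d₁ : ℕ) (p : Fin (c₁ + c₂) → Fin (d₁ + d₂)) : Prop :=
  ∀ i, ((p i : ℕ) < d₁ ↔ (i : ℕ) < c₁)

lemma BlockCond.castAdd_lt {p : Fin (c₁ + c₂) → Fin (d₁ + d₂)} (hp : BlockCond c₁ d₁ p)
    (i : Fin c₁) : (p (castAdd c₂ i) : ℕ) < d₁ :=
  (hp _).2 (by simp)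

lemma BlockCond.le_natAdd {p : Fin (c₁ + c₂) → Fin (d₁ + d₂)} (hp : BlockCond c₁ d₁ p)
    (j : Fin c₂) : d₁ ≤ (p (natAdd c₁ j) : ℕ) := by
  simpa using (hp _).not.2 (by simp)

def strictMonoBlockCondEquiv :
    {p : Fin (c₁ + c₂) → Fin (d₁ + d₂) // StrictMono p ∧ BlockCond c₁ d₁ p} ≃
      {f : Fin c₁ → Fin d₁ // StrictMono f} × {g : Fin c₂ → Fin d₂ // StrictMono g} where
  toFun p :=
    (⟨fun i => ⟨p.1 (castAdd c₂ i), p.2.2.castAdd_lt i⟩, fun _ _ h => p.2.1 h⟩,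
     ⟨fun j => ⟨p.1 (natAdd c₁ j) - d₁, by
        have := (p.1 (natAdd c₁ j)).2
        have := p.2.2.le_natAdd j
        omega⟩, fun i j h => by
        have hij := p.2.1 ((natAdd_lt_natAdd_iff c₁).2 h)
        have := p.2.2.le_natAdd i
        rw [Fin.lt_def] at hij ⊢
        dsimp only
        omega⟩)
  invFun fg := ⟨append (castAdd d₂ ∘ fg.1.1) (natAdd d₁ ∘ fg.2.1),
    strictMono_append_castAdd_natAdd fg.1.2 fg.2.2, fun i => by
      induction i using Fin.addCases <;> simp⟩
  left_inv p := by
    ext i : 3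
    induction i using Fin.addCases with
    | left i => simp
    | right i => have := p.2.2.le_natAdd i; simp; omega
  right_inv fg := by
    ext i : 3 <;> simp

theorem card_subtype_strictMono_blockCond (c₁ c₂ d₁ d₂ : ℕ) :
    Nat.card {p : Fin (c₁ + c₂) → Fin (d₁ + d₂) // StrictMono p ∧ BlockCond c₁ d₁ p} =
      d₁.choose c₁ * d₂.choose c₂ := by
  rw [Nat.card_congr strictMonoBlockCondEquiv, Nat.card_prod, card_subtype_strictMono,
    card_subtype_strictMono]

end Fin

section Embeddings

variable {α : Type*}

abbrev SubseqEmbedding (C A : List α) : Type _ :=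
  {p : Fin C.length → Fin A.length // StrictMono p ∧ ∀ i, A.get (p i) = C.get i}

theorem embCount_eq_card_mul_card (A B C : List α) :
    EmbCount A B C = Nat.card (SubseqEmbedding C A) * Nat.card (SubseqEmbedding C B) := by
  rw [EmbCount, ← Nat.card_prod]
  exact Nat.card_congr
    { toFun x :=
        (⟨x.1.1, x.2.1, fun i => (x.2.2.2 i).1⟩, ⟨x.1.2, x.2.2.1, fun i => (x.2.2.2 i).2⟩)
      invFun z := ⟨(z.1.1, z.2.1), z.1.2.1, z.2.2.1, fun i => ⟨z.1.2.2 i, z.2.2.2 i⟩⟩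
      left_inv _ := rfl
      right_inv _ := rfl }

theorem List.getElem_replicate_append_replicate (a b : α) {d₁ d₂ j : ℕ}
    (hj : j < (List.replicate d₁ a ++ List.replicate d₂ b).length) :
    (List.replicate d₁ a ++ List.replicate d₂ b)[j] = if j < d₁ then a else b := by
  by_cases h : j < d₁
  · rw [if_pos h, List.getElem_append_left (by simpa using h), List.getElem_replicate]
  · rw [if_neg h, List.getElem_append_right (by simpa using h), List.getElem_replicate]

theorem card_subseqEmbedding_replicate_append_replicate {a b : α} (hab : a ≠ b)
    (c₁ c₂ d₁ d₂ : ℕ) :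
    Nat.card (SubseqEmbedding (List.replicate c₁ a ++ List.replicate c₂ b)
        (List.replicate d₁ a ++ List.replicate d₂ b)) = d₁.choose c₁ * d₂.choose c₂ := by
  have hmatch : ∀ (p : Fin (List.replicate c₁ a ++ List.replicate c₂ b).length →
      Fin (List.replicate d₁ a ++ List.replicate d₂ b).length) i,
      (List.replicate d₁ a ++ List.replicate d₂ b).get (p i) =
          (List.replicate c₁ a ++ List.replicate c₂ b).get i ↔
        ((p i : ℕ) < d₁ ↔ (i : ℕ) < c₁) := by
    intro p i
    simp only [List.get_eq_getElem, List.getElem_replicate_append_replicate]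
    by_cases hp : (p i : ℕ) < d₁ <;> by_cases hi : (i : ℕ) < c₁ <;> simp [hp, hi, hab, hab.symm]
  rw [Nat.card_congr (Equiv.subtypeEquivRight fun p =>
    and_congr_right fun _ => forall_congr' (hmatch p)),
    List.length_append, List.length_append, List.length_replicate, List.length_replicate,
    List.length_replicate, List.length_replicate]
  exact Fin.card_subtype_strictMono_blockCond c₁ c₂ d₁ d₂

theorem embCount_replicate_append_replicate {a b : α} (hab : a ≠ b) (L M Y N : ℕ) :
    EmbCount (List.replicate M a ++ List.replicate Y b) (List.replicate L a ++ List.replicate N b)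
        (List.replicate L a ++ List.replicate Y b) = M.choose L * N.choose Y := by
  rw [embCount_eq_card_mul_card, card_subseqEmbedding_replicate_append_replicate hab,
    card_subseqEmbedding_replicate_append_replicate hab, Nat.choose_self, Nat.choose_self,
    mul_one, one_mul]

end Embeddings

section LCS

variable {α : Type*}

theorem List.Sublist.eq_replicate_append_replicate {a b : α} {D : List α} {M N : ℕ}
    (h : D.Sublist (replicate M a ++ replicate N b)) :
    ∃ i ≤ M, ∃ j ≤ N, D = replicate i a ++ replicate j b := by
  obtain ⟨l₁, l₂, rfl, h₁, h₂⟩ := sublist_append_iff.1 h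
  obtain ⟨i, hi, rfl⟩ := sublist_replicate_iff.1 h₁
  obtain ⟨j, hj, rfl⟩ := sublist_replicate_iff.1 h₂
  exact ⟨i, hi, j, hj, rfl⟩

theorem isLCS_replicate_append_replicate {a b : α} (hab : a ≠ b) {L M Y N : ℕ}
    (hLM : L ≤ M) (hYN : Y ≤ N) :
    IsLCS (List.replicate M a ++ List.replicate Y b) (List.replicate L a ++ List.replicate N b)
      (List.replicate L a ++ List.replicate Y b) := by
  refine ⟨((List.replicate_sublist_replicate a).2 hLM).append (.refl _),
    (List.Sublist.refl _).append ((List.replicate_sublist_replicate b).2 hYN), ?_⟩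
  intro D hDA hDB
  obtain ⟨i, -, j, hj, rfl⟩ := hDA.eq_replicate_append_replicate
  have hi : i ≤ L := by
    classical
    simpa [List.count_replicate, hab.symm] using hDB.count_le a
  simp only [List.length_append, List.length_replicate]
  omega

end LCS

theorem stmt9_general {α : Type*} (a b : α) (hab : a ≠ b) (m n l y : ℕ)
    (hlm : l ≤ m) (hmn : m ≤ n) :
    IsLCS (List.replicate (m - y) a ++ List.replicate y b)
        (List.replicate (l - y) a ++ List.replicate (n + y - l) b)
        (List.replicate (l - y) a ++ List.replicate y b) ∧
      EmbCount (List.replicate (m - y) a ++ List.replicate y b)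
          (List.replicate (l - y) a ++ List.replicate (n + y - l) b)
          (List.replicate (l - y) a ++ List.replicate y b) =
        Nat.choose (m - y) (l - y) * Nat.choose (n + y - l) y :=
  ⟨isLCS_replicate_append_replicate hab (by omega) (by omega),
    embCount_replicate_append_replicate hab _ _ _ _⟩

theorem stmt9 {α : Type*} (a b : α) (hab : a ≠ b) (m n l y : ℕ)
    (hyl : y ≤ l) (hlm : l ≤ m) (hmn : m ≤ n) :
    IsLCS (List.replicate (m - y) a ++ List.replicate y b)
        (List.replicate (l - y) a ++ List.replicate (n + y - l) b)
        (List.replicate (l - y) a ++ List.replicate y b) ∧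
      EmbCount (List.replicate (m - y) a ++ List.replicate y b)
          (List.replicate (l - y) a ++ List.replicate (n + y - l) b)
          (List.replicate (l - y) a ++ List.replicate y b) =
        Nat.choose (m - y) (l - y) * Nat.choose (n + y - l) y :=
  stmt9_general a b hab m n l y hlm hmn
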